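/- Let C = ⟨a, b⟩ be an HFP-code of type Q of length 4n with kernel of dimension 2, where κ = a^ι · b is the nontrivial kernel element with zero first coordinate, and with π_a = (1,2,…,2n)(2n+1,…,4n) and π_b = (1,4n)(2,4n−1)⋯(2n,2n+1). Then κ = (v‖v) with v = (0,1,0,1,…,0,1) when ι is even, and κ = (v‖v+1) when ι is odd (up to complement). -/

import Mathlib

/-- The action of a coordinate permutation `σ` on a binary vector:
`(permAct σ v) i = v (σ⁻¹ i)`. -/
def permAct {m : ℕ} (σ : Equiv.Perm (Fin m)) (v : Fin m → ZMod 2) : Fin m → ZMod 2 :=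
  fun i => v (σ.symm i)

/-- The propelinear operation `x · y = x + π_x(y)`. -/
def pmul {m : ℕ} (π : (Fin m → ZMod 2) → Equiv.Perm (Fin m))
    (x y : Fin m → ZMod 2) : Fin m → ZMod 2 :=
  x + permAct (π x) y

/-- Powers with respect to the propelinear operation. -/
def ppow {m : ℕ} (π : (Fin m → ZMod 2) → Equiv.Perm (Fin m))
    (g : Fin m → ZMod 2) : ℕ → Fin m → ZMod 2
  | 0 => 0
  | k + 1 => pmul π g (ppow π g k)

/-- The all-ones vector. -/
def allOnes (m : ℕ) : Fin m → ZMod 2 := fun _ => 1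

/-!
From `κ · κ = u` one gets `κ (π_κ j) = κ j + 1`. Translation by `κ` preserves `C` and `a` is
invertible in `C`, so translation by `π_a(κ)` preserves `C` too; hence `π_a(κ) ∈ {κ, κ + u}`,
i.e. `κ (π_a j) = κ j + c` for a constant `c`. Walking along the two cycles of `π_a`, `κ` is
determined by `c` and by its value `1` at `π_κ(0) = π_a^ι(4n-1)`; for `c = 1` this is the
claimed form.

For `c = 0`, `κ = (0…0‖1…1)`, and every codeword outside `{0, u, κ, κ + u}` has exactly `n`
ones in the first half. This fails for `a` or for `a² = a + π_a(a)`: the first-half sum of `a`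
is the coordinate `2n-1` of `a^{2n} = u`, hence odd, while that of `a²` is even. For `n = 1`
the code is the even-weight code of length 4, whose kernel has dimension 3.
-/

open Finset

section Propelinear

variable {m : ℕ}

@[simp]
theorem permAct_apply (σ : Equiv.Perm (Fin m)) (v : Fin m → ZMod 2) (i : Fin m) :
    permAct σ v i = v (σ.symm i) := rfl

theorem permAct_add (σ : Equiv.Perm (Fin m)) (v w : Fin m → ZMod 2) :
    permAct σ (v + w) = permAct σ v + permAct σ w := rfl

theorem permAct_injective (σ : Equiv.Perm (Fin m)) : Function.Injective (permAct σ) :=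
  fun v w h => funext fun j => by simpa using congrFun h (σ j)

theorem pmul_zero (π : (Fin m → ZMod 2) → Equiv.Perm (Fin m)) (x : Fin m → ZMod 2) :
    pmul π x 0 = x := by
  ext; simp [pmul]

theorem apply_eq_add_one_of_pmul_self {π : (Fin m → ZMod 2) → Equiv.Perm (Fin m)}
    {v : Fin m → ZMod 2} (h : pmul π v v = allOnes m) (j : Fin m) :
    v (π v j) = v j + 1 := by
  have := congrFun h (π v j)
  simp only [pmul, Pi.add_apply, permAct_apply, Equiv.symm_apply_apply, allOnes] at this
  grind

theorem exists_forall_apply_eq_add {σ : Equiv.Perm (Fin m)} {v : Fin m → ZMod 2}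
    (hv0 : v ≠ 0) (hvu : v ≠ allOnes m)
    (h : permAct σ v = 0 ∨ permAct σ v = allOnes m ∨ permAct σ v = v ∨
      permAct σ v = v + allOnes m) :
    ∃ c : ZMod 2, ∀ j, v (σ j) = v j + c := by
  rcases h with h | h | h | h
  · exact absurd (permAct_injective σ (h.trans rfl)) hv0
  · exact absurd (permAct_injective σ (h.trans rfl)) hvu
  · exact ⟨0, fun j => by simpa using (congrFun h (σ j)).symm⟩
  · refine ⟨1, fun j => ?_⟩
    have := congrFun h (σ j)
    simp only [permAct_apply, Equiv.symm_apply_apply, Pi.add_apply, allOnes] at this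
    grind

theorem apply_pow_apply_eq_add {σ : Equiv.Perm (Fin m)} {v : Fin m → ZMod 2} {c : ZMod 2}
    (h : ∀ j, v (σ j) = v j + c) (k : ℕ) (j : Fin m) :
    v ((σ ^ k) j) = v j + k * c := by
  induction k with
  | zero => simp
  | succ k ih => rw [pow_succ', Equiv.Perm.mul_apply, h, ih]; push_cast; ring

theorem ppow_apply_pow_apply (π : (Fin m → ZMod 2) → Equiv.Perm (Fin m))
    (a : Fin m → ZMod 2) (k : ℕ) (j : Fin m) :
    ppow π a k ((π a ^ k) j) = ∑ i ∈ range k, a ((π a ^ (i + 1)) j) := by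
  induction k with
  | zero => rfl
  | succ k ih =>
    rw [sum_range_succ, ← ih]
    simp only [ppow, pmul, Pi.add_apply, permAct_apply]
    rw [pow_succ', Equiv.Perm.mul_apply, Equiv.symm_apply_apply, add_comm]

theorem ppow_one_eq (π : (Fin m → ZMod 2) → Equiv.Perm (Fin m)) (a : Fin m → ZMod 2) :
    ppow π a 1 = a :=
  pmul_zero π a

structure IsPropelinearCode (C : Finset (Fin m → ZMod 2))
    (π : (Fin m → ZMod 2) → Equiv.Perm (Fin m)) : Prop where
  zero_mem : 0 ∈ C
  pmul_mem : ∀ x ∈ C, ∀ y ∈ C, pmul π x y ∈ C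
  map_pmul : ∀ x ∈ C, ∀ y ∈ C, π (pmul π x y) = π x * π y
  map_zero : π 0 = 1

namespace IsPropelinearCode

variable {C : Finset (Fin m → ZMod 2)} {π : (Fin m → ZMod 2) → Equiv.Perm (Fin m)}
  {a b x y : Fin m → ZMod 2}

theorem zero_pmul (hC : IsPropelinearCode C π) (y : Fin m → ZMod 2) : pmul π 0 y = y := by
  rw [pmul, hC.map_zero, zero_add]; rfl

theorem pmul_assoc (hC : IsPropelinearCode C π) (hx : x ∈ C) (hy : y ∈ C)
    (z : Fin m → ZMod 2) : pmul π (pmul π x y) z = pmul π x (pmul π y z) := by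
  have h := hC.map_pmul x hx y hy
  unfold pmul at h ⊢
  ext i
  simp [h, Equiv.Perm.mul_def, add_assoc]

theorem ppow_mem (hC : IsPropelinearCode C π) (ha : a ∈ C) (k : ℕ) : ppow π a k ∈ C := by
  induction k with
  | zero => exact hC.zero_mem
  | succ k ih => exact hC.pmul_mem a ha _ ih

theorem map_ppow (hC : IsPropelinearCode C π) (ha : a ∈ C) (k : ℕ) :
    π (ppow π a k) = π a ^ k := by
  induction k with
  | zero => exact hC.map_zero
  | succ k ih => rw [ppow, hC.map_pmul a ha _ (hC.ppow_mem ha k), ih, pow_succ']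

theorem ppow_add (hC : IsPropelinearCode C π) (ha : a ∈ C) (i j : ℕ) :
    ppow π a (i + j) = pmul π (ppow π a i) (ppow π a j) := by
  induction i with
  | zero => rw [Nat.zero_add, ppow, hC.zero_pmul]
  | succ i ih =>
    rw [Nat.add_right_comm, ppow, ih, ppow, hC.pmul_assoc ha (hC.ppow_mem ha i)]

theorem ppow_pmul_pmul_ppow (hC : IsPropelinearCode C π) (ha : a ∈ C) (hb : b ∈ C) {N : ℕ}
    (hN : ppow π a (N + 1) = 0) (hrel : pmul π a b = pmul π b (ppow π a N)) (i : ℕ) :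
    pmul π (ppow π a i) (pmul π b (ppow π a i)) = b := by
  have hA := hC.ppow_mem ha
  induction i with
  | zero => rw [ppow, pmul_zero, hC.zero_pmul]
  | succ i ih =>
    have hsucc : ppow π a (i + 1) = pmul π (ppow π a i) a := by rw [hC.ppow_add ha, ppow_one_eq]
    calc pmul π (ppow π a (i + 1)) (pmul π b (ppow π a (i + 1)))
        = pmul π (pmul π (ppow π a i) a) (pmul π b (ppow π a (i + 1))) := by rw [← hsucc]
      _ = pmul π (ppow π a i) (pmul π (pmul π a b) (ppow π a (i + 1))) := by
          rw [hC.pmul_assoc (hA i) ha, hC.pmul_assoc ha hb]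
      _ = pmul π (ppow π a i) (pmul π b (ppow π a (N + 1 + i))) := by
          rw [hrel, hC.pmul_assoc hb (hA N), ← hC.ppow_add ha, Nat.add_right_comm, add_assoc]
      _ = b := by rw [hC.ppow_add ha, hN, hC.zero_pmul, ih]

theorem pmul_ppow_pmul_self (hC : IsPropelinearCode C π) (ha : a ∈ C) (hb : b ∈ C) {N : ℕ}
    (hN : ppow π a (N + 1) = 0) (hrel : pmul π a b = pmul π b (ppow π a N)) (i : ℕ) :
    pmul π (pmul π (ppow π a i) b) (pmul π (ppow π a i) b) = pmul π b b := by
  have hA := hC.ppow_mem ha i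
  rw [hC.pmul_assoc hA hb, ← hC.pmul_assoc hb hA, ← hC.pmul_assoc hA (hC.pmul_mem b hb _ hA),
    hC.ppow_pmul_pmul_ppow ha hb hN hrel]

theorem image_add_permAct_eq (hC : IsPropelinearCode C π) (hx : x ∈ C) (hy : y ∈ C)
    (hxy : pmul π x y = 0) {z : Fin m → ZMod 2} (hz : C.image (fun v => v + z) = C) :
    C.image (fun v => v + permAct (π x) z) = C := by
  refine eq_of_subset_of_card_le (fun w hw => ?_)
    (card_image_of_injective _ (add_left_injective _)).ge
  obtain ⟨c, hc, rfl⟩ := mem_image.1 hw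
  have hmem : pmul π y c + z ∈ C := hz ▸ mem_image_of_mem _ (hC.pmul_mem y hy c hc)
  have hcz : pmul π x (pmul π y c + z) = c + permAct (π x) z := by
    rw [pmul, permAct_add, ← add_assoc, ← pmul, ← hC.pmul_assoc hx hy, hxy, hC.zero_pmul]
  exact hcz ▸ hC.pmul_mem x hx _ hmem

end IsPropelinearCode

end Propelinear

section HalfRotation

variable {n : ℕ}

/-- `σ = (0 1 … 2n-1)(2n … 4n-1)`, written with the 0-based indices of `Fin (4n)`. -/
def IsHalfRotation (n : ℕ) (σ : Equiv.Perm (Fin (4 * n))) : Prop :=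
  ∀ i : Fin (4 * n), (σ i : ℕ) =
    if (i : ℕ) < 2 * n then ((i : ℕ) + 1) % (2 * n) else 2 * n + ((i : ℕ) + 1) % (2 * n)

namespace IsHalfRotation

variable {σ : Equiv.Perm (Fin (4 * n))}

theorem apply_lt_iff (hσ : IsHalfRotation n σ) (j : Fin (4 * n)) :
    (σ j : ℕ) < 2 * n ↔ (j : ℕ) < 2 * n := by
  rw [hσ j]
  split_ifs with h
  · exact iff_of_true (Nat.mod_lt _ (by omega)) h
  · exact iff_of_false (by omega) h

theorem pow_apply_lt_iff (hσ : IsHalfRotation n σ) (k : ℕ) (j : Fin (4 * n)) :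
    ((σ ^ k) j : ℕ) < 2 * n ↔ (j : ℕ) < 2 * n := by
  induction k with
  | zero => rfl
  | succ k ih => rw [pow_succ', Equiv.Perm.mul_apply, hσ.apply_lt_iff, ih]

theorem val_pow_apply (hσ : IsHalfRotation n σ) {j : Fin (4 * n)} {t : ℕ}
    (h : (j : ℕ) + t < 2 * n ∨ 2 * n ≤ j ∧ (j : ℕ) + t < 4 * n) :
    ((σ ^ t) j : ℕ) = j + t := by
  induction t with
  | zero => rfl
  | succ t ih =>
    rw [pow_succ', Equiv.Perm.mul_apply, hσ, ih (by omega)]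
    split_ifs with h'
    · rw [Nat.mod_eq_of_lt (by omega), add_assoc]
    · rw [Nat.mod_eq_sub_mod (by omega), Nat.mod_eq_of_lt (by omega)]
      omega

theorem pow_succ_apply_pred (hσ : IsHalfRotation n σ) {i : ℕ} (hi : i < 2 * n) :
    (σ ^ (i + 1)) ⟨2 * n - 1, by omega⟩ = ⟨i, by omega⟩ := by
  have h0 : σ ⟨2 * n - 1, by omega⟩ = ⟨0, by omega⟩ := by
    ext
    rw [hσ, if_pos (by dsimp only; omega)]
    simp [Nat.sub_add_cancel (by omega : 1 ≤ 2 * n)]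
  ext
  rw [pow_succ, Equiv.Perm.mul_apply, h0, hσ.val_pow_apply (by simp [hi])]
  simp

theorem apply_eq_of_apply_eq_add (hσ : IsHalfRotation n σ) (hn : 0 < n)
    {κ : Fin (4 * n) → ZMod 2} {c : ZMod 2} (hc : ∀ j, κ (σ j) = κ j + c)
    (h0 : κ ⟨0, by omega⟩ = 0) {ι : ℕ} (hlast : κ ((σ ^ ι) ⟨4 * n - 1, by omega⟩) = 1) (j : Fin (4 * n)) :
    κ j = if (j : ℕ) < 2 * n then (j : ZMod 2) * c else 1 + (1 + ι + j) * c := by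
  have hupper : ∀ t (ht : 2 * n + t < 4 * n),
      κ ⟨2 * n + t, ht⟩ = κ ⟨2 * n, by omega⟩ + t * c := fun t ht => by
    rw [← apply_pow_apply_eq_add hc]
    exact congrArg κ (Fin.ext (hσ.val_pow_apply (Or.inr ⟨le_rfl, ht⟩))).symm
  have hodd : ((2 * n - 1 : ℕ) : ZMod 2) = 1 := by
    rw [← ZMod.natCast_mod, show (2 * n - 1) % 2 = 1 by omega, Nat.cast_one]
  have hlast' := hupper (2 * n - 1) (by omega)
  rw [hodd, show (⟨2 * n + (2 * n - 1), by omega⟩ : Fin (4 * n)) = ⟨4 * n - 1, by omega⟩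
    from Fin.ext (by dsimp only; omega)] at hlast'
  rw [apply_pow_apply_eq_add hc, hlast'] at hlast
  have h2 : (2 : ZMod 2) = 0 := rfl
  split_ifs with hj
  · have hwalk := apply_pow_apply_eq_add hc (j : ℕ) ⟨0, by omega⟩
    rwa [h0, zero_add, show (σ ^ (j : ℕ)) ⟨0, by omega⟩ = j from
      Fin.ext ((hσ.val_pow_apply (Or.inl (by simpa using hj))).trans (zero_add _))] at hwalk
  · obtain ⟨t, ht⟩ : ∃ t, (j : ℕ) = 2 * n + t := ⟨j - 2 * n, by omega⟩
    rw [show j = ⟨2 * n + t, by omega⟩ from Fin.ext ht, hupper]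
    push_cast
    linear_combination hlast - (ι + n + 1) * c * h2

end IsHalfRotation

theorem sum_eq_card_filter_ne_zero {ι : Type*} (s : Finset ι) (v : ι → ZMod 2) :
    ∑ j ∈ s, v j = #(s.filter (v · ≠ 0)) := by
  rw [natCast_card_filter]
  refine sum_congr rfl fun j _ => ?_
  generalize v j = x
  revert x
  decide

def firstHalf (n : ℕ) : Finset (Fin (4 * n)) := univ.filter fun j => (j : ℕ) < 2 * n

def secondHalfOnes (n : ℕ) : Fin (4 * n) → ZMod 2 := fun j => if (j : ℕ) < 2 * n then 0 else 1

theorem card_filter_firstHalf_ne_zero {v : Fin (4 * n) → ZMod 2} (h0 : hammingDist v 0 = 2 * n)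
    (h1 : hammingDist v (secondHalfOnes n) = 2 * n) :
    #((firstHalf n).filter (v · ≠ 0)) = n := by
  have hsplit : ∀ j, ((if v j ≠ 0 then 1 else 0) + if v j ≠ secondHalfOnes n j then 1 else 0)
      = if (j : ℕ) < 2 * n then 2 * (if v j ≠ 0 then 1 else 0) else 1 := by
    intro j
    unfold secondHalfOnes
    generalize v j = x
    split_ifs <;> revert x <;> decide
  have hupper : #(univ.filter fun j : Fin (4 * n) => ¬ (j : ℕ) < 2 * n) = 2 * n := by
    have := card_filter_add_card_filter_not (s := univ)
      (p := fun j : Fin (4 * n) => (j : ℕ) < 2 * n)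
    rw [Fin.card_filter_val_lt, card_univ, Fintype.card_fin] at this
    omega
  have : 4 * n = 2 * #((firstHalf n).filter (v · ≠ 0)) + 2 * n := by
    calc 4 * n = hammingDist v 0 + hammingDist v (secondHalfOnes n) := by omega
      _ = ∑ j : Fin (4 * n),
            if (j : ℕ) < 2 * n then 2 * (if v j ≠ 0 then 1 else 0) else 1 := by
        simp only [hammingDist, card_filter, ← sum_add_distrib, hsplit, Pi.zero_apply]
      _ = _ := by
        rw [sum_ite, ← mul_sum, ← card_filter, sum_const, smul_eq_mul, mul_one, hupper,
          firstHalf, filter_filter]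
  omega

theorem IsHalfRotation.sum_firstHalf_permAct {σ : Equiv.Perm (Fin (4 * n))}
    (hσ : IsHalfRotation n σ) (v : Fin (4 * n) → ZMod 2) :
    ∑ j ∈ firstHalf n, permAct σ v j = ∑ j ∈ firstHalf n, v j :=
  sum_equiv σ.symm (fun j => by simp [firstHalf, ← hσ.apply_lt_iff (σ.symm j)])
    fun _ _ => rfl

theorem IsHalfRotation.sum_firstHalf_eq_ppow
    {π : (Fin (4 * n) → ZMod 2) → Equiv.Perm (Fin (4 * n))} {a : Fin (4 * n) → ZMod 2}
    (hσ : IsHalfRotation n (π a)) (hn : 0 < n) :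
    ∑ j ∈ firstHalf n, a j = ppow π a (2 * n) ⟨2 * n - 1, by omega⟩ := by
  have hfix : (π a ^ (2 * n)) ⟨2 * n - 1, by omega⟩ = ⟨2 * n - 1, by omega⟩ := by
    simpa [Nat.sub_add_cancel (by omega : 1 ≤ 2 * n)] using
      hσ.pow_succ_apply_pred (i := 2 * n - 1) (by omega)
  conv_rhs => rw [← hfix]
  rw [ppow_apply_pow_apply]
  symm
  refine sum_nbij' (fun i => (π a ^ (i + 1)) ⟨2 * n - 1, by omega⟩) (fun j => (j : ℕ))
    ?_ ?_ ?_ ?_ fun _ _ => rfl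
  · intro i hi
    rw [mem_range] at hi
    simp [firstHalf, hσ.pow_succ_apply_pred hi, hi]
  · intro j hj
    simpa [firstHalf] using hj
  · intro i hi
    rw [mem_range] at hi
    simp [hσ.pow_succ_apply_pred hi]
  · intro j hj
    simp only [firstHalf, mem_filter, mem_univ, true_and] at hj
    rw [hσ.pow_succ_apply_pred hj]

end HalfRotation

section BadCase

variable {n : ℕ} {C : Finset (Fin (4 * n) → ZMod 2)}
  {π : (Fin (4 * n) → ZMod 2) → Equiv.Perm (Fin (4 * n))}

theorem IsPropelinearCode.sum_firstHalf_eq_of_mem (hC : IsPropelinearCode C π)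
    (hu : allOnes (4 * n) ∈ C) (hπu : π (allOnes (4 * n)) = 1)
    (hdist : ∀ x ∈ C, ∀ y ∈ C, x ≠ y → x ≠ y + allOnes (4 * n) → hammingDist x y = 2 * n)
    (hn : 0 < n) (hκC : secondHalfOnes n ∈ C)
    (hκ : 2 * n ≤ (π (secondHalfOnes n) ⟨0, by omega⟩ : ℕ))
    {x : Fin (4 * n) → ZMod 2} (hx : x ∈ C) (hx0 : 0 < (π x ⟨0, by omega⟩ : ℕ))
    (hx1 : (π x ⟨0, by omega⟩ : ℕ) < 2 * n) :
    ∑ j ∈ firstHalf n, x j = n := by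
  have hκu : π (secondHalfOnes n + allOnes (4 * n)) = π (secondHalfOnes n) := by
    have h : pmul π (allOnes (4 * n)) (secondHalfOnes n) =
        secondHalfOnes n + allOnes (4 * n) := by
      rw [pmul, hπu, add_comm]; rfl
    rw [← h, hC.map_pmul _ hu _ hκC, hπu, one_mul]
  have hx_ne_zero : x ≠ 0 := by rintro rfl; simp [hC.map_zero] at hx0
  have hx_ne_allOnes : x ≠ 0 + allOnes (4 * n) := by
    rw [zero_add]; rintro rfl; simp [hπu] at hx0
  have hx_ne_κ : x ≠ secondHalfOnes n := by rintro rfl; omega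
  have hx_ne_κu : x ≠ secondHalfOnes n + allOnes (4 * n) := by
    rintro rfl; rw [hκu] at hx1; omega
  rw [sum_eq_card_filter_ne_zero, card_filter_firstHalf_ne_zero
    (hdist x hx 0 hC.zero_mem hx_ne_zero hx_ne_allOnes) (hdist x hx _ hκC hx_ne_κ hx_ne_κu)]

theorem IsPropelinearCode.secondHalfOnes_notMem (hC : IsPropelinearCode C π)
    (hu : allOnes (4 * n) ∈ C) (hπu : π (allOnes (4 * n)) = 1)
    (hdist : ∀ x ∈ C, ∀ y ∈ C, x ≠ y → x ≠ y + allOnes (4 * n) → hammingDist x y = 2 * n)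
    (hn : 2 ≤ n) {a : Fin (4 * n) → ZMod 2} (ha : a ∈ C) (hπa : IsHalfRotation n (π a))
    (ha2n : ppow π a (2 * n) = allOnes (4 * n))
    (hκ : 2 * n ≤ (π (secondHalfOnes n) ⟨0, by omega⟩ : ℕ)) :
    secondHalfOnes n ∉ C := by
  intro hκC
  have hsum (i : ℕ) (hi0 : 0 < i) (hi : i < 2 * n) := hC.sum_firstHalf_eq_of_mem hu hπu hdist
    (by omega) hκC hκ (hC.ppow_mem ha i) (x := ppow π a i)
    (by rw [hC.map_ppow ha, hπa.val_pow_apply (by dsimp only; omega)]; simpa using hi0)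
    (by rw [hC.map_ppow ha, hπa.val_pow_apply (by dsimp only; omega)]; simpa using hi)
  have h1 := hsum 1 (by omega) (by omega)
  rw [ppow_one_eq, hπa.sum_firstHalf_eq_ppow (by omega), ha2n] at h1
  have h2 : ∑ j ∈ firstHalf n, ppow π a 2 j = 0 := by
    change ∑ j ∈ firstHalf n, (a + permAct (π a) (ppow π a 1)) j = 0
    simp only [Pi.add_apply, sum_add_distrib, ppow_one_eq,
      hπa.sum_firstHalf_permAct, CharTwo.add_self_eq_zero]
  exact one_ne_zero (h1.trans ((hsum 2 (by omega) (by omega)).symm.trans h2))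

end BadCase

theorem not_forall_image_add_eq_iff_of_length_four (C : Finset (Fin 4 → ZMod 2))
    (h0 : 0 ∈ C) (hcard : #C = 8)
    (hdist : ∀ x ∈ C, ∀ y ∈ C, x ≠ y → x ≠ y + allOnes 4 → hammingDist x y = 2)
    (κ : Fin 4 → ZMod 2) :
    ¬ ∀ z, C.image (fun v => v + z) = C ↔
      (z = 0 ∨ z = allOnes 4 ∨ z = κ ∨ z = κ + allOnes 4) := by
  intro hker
  have hweight : ∀ v : Fin 4 → ZMod 2, v = 0 ∨ v = allOnes 4 ∨ hammingDist v 0 = 2 →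
      ∑ i, v i = 0 := by decide
  have hCE : C = univ.filter fun v => ∑ i, v i = 0 := by
    refine eq_of_subset_of_card_le (fun x hx => mem_filter.2 ⟨mem_univ x, hweight x ?_⟩)
      (by rw [hcard]; decide)
    by_cases hx0 : x = 0
    · exact Or.inl hx0
    by_cases hxu : x = allOnes 4
    · exact Or.inr (Or.inl hxu)
    exact Or.inr (Or.inr (hdist x hx 0 h0 hx0 (by rwa [zero_add])))
  have hinv : ∀ z : Fin 4 → ZMod 2, ∑ i, z i = 0 → C.image (fun v => v + z) = C := by
    intro z hz
    refine eq_of_subset_of_card_le (fun w hw => ?_)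
      (card_image_of_injective _ (add_left_injective _)).ge
    obtain ⟨v, hv, rfl⟩ := mem_image.1 hw
    rw [hCE, mem_filter] at hv ⊢
    simp [sum_add_distrib, hv.2, hz]
  have hall : ∀ κ : Fin 4 → ZMod 2, ∃ z : Fin 4 → ZMod 2, ∑ i, z i = 0 ∧
      ¬ (z = 0 ∨ z = allOnes 4 ∨ z = κ ∨ z = κ + allOnes 4) := by decide
  obtain ⟨z, hz, hzκ⟩ := hall κ
  exact hzκ ((hker z).1 (hinv z hz))

/-- Let `C = ⟨a, b⟩` be an HFP-code of type Q of length `4n` with kernel of dimension 2,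
`K(C) = {0, u, κ, κ+u}` with `κ = a^ι · b` having zero first coordinate, and with
`π_a = (1,…,2n)(2n+1,…,4n)`, `π_b = (1,4n)(2,4n−1)⋯(2n,2n+1)`. Then `κ = (v‖v)` with
`v = (0,1,0,1,…,0,1)` when `ι` is even, and `κ = (v‖v+1)` when `ι` is odd. -/
theorem stmt_19 (n : ℕ) (hn : 0 < n) (C : Finset (Fin (4*n) → ZMod 2))
    (π : (Fin (4*n) → ZMod 2) → Equiv.Perm (Fin (4*n)))
    (h0 : (0 : Fin (4*n) → ZMod 2) ∈ C) (hu : allOnes (4*n) ∈ C)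
    (hcard : C.card = 8*n)
    (hclosed : ∀ x ∈ C, ∀ y ∈ C, pmul π x y ∈ C)
    (hhom : ∀ x ∈ C, ∀ y ∈ C, π (pmul π x y) = π x * π y)
    (hπ0 : π 0 = 1) (hπu : π (allOnes (4*n)) = 1)
    (hdist : ∀ x ∈ C, ∀ y ∈ C, x ≠ y → x ≠ y + allOnes (4*n) → hammingDist x y = 2*n)
    (a b : Fin (4*n) → ZMod 2) (ha : a ∈ C) (hb : b ∈ C)
    (ha4n : ppow π a (4*n) = 0)
    (ha2n : ppow π a (2*n) = allOnes (4*n))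
    (hb2 : pmul π b b = allOnes (4*n))
    (hrel : pmul π a b = pmul π b (ppow π a (4*n - 1)))
    (hπa : ∀ i : Fin (4*n), ((π a i : ℕ)) =
      if (i : ℕ) < 2*n then ((i : ℕ) + 1) % (2*n) else 2*n + (((i : ℕ) + 1) % (2*n)))
    (hπb : ∀ i : Fin (4*n), ((π b i : ℕ)) = 4*n - 1 - (i : ℕ))
    (ι : ℕ) (κ : Fin (4*n) → ZMod 2)
    (hκ : κ = pmul π (ppow π a ι) b)
    (hκ0 : κ ≠ 0) (hκu : κ ≠ allOnes (4*n))
    (hκfirst : κ ⟨0, by omega⟩ = 0)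
    (hker : ∀ z : Fin (4*n) → ZMod 2, C.image (fun v => v + z) = C ↔
      (z = 0 ∨ z = allOnes (4*n) ∨ z = κ ∨ z = κ + allOnes (4*n))) :
    (ι % 2 = 0 → κ = fun i : Fin (4*n) => (((i : ℕ) % 2 : ℕ) : ZMod 2)) ∧
    (ι % 2 = 1 → κ = fun i : Fin (4*n) => if (i : ℕ) < 2*n
      then (((i : ℕ) % 2 : ℕ) : ZMod 2) else (((i : ℕ) % 2 : ℕ) : ZMod 2) + 1) := by
  have hC : IsPropelinearCode C π := ⟨h0, hclosed, hhom, hπ0⟩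
  replace hπa : IsHalfRotation n (π a) := hπa
  obtain rfl | hn2 : n = 1 ∨ 2 ≤ n := by omega
  · exact (not_forall_image_add_eq_iff_of_length_four C h0 hcard hdist κ hker).elim
  have hN : ppow π a (4 * n - 1 + 1) = 0 := by rwa [Nat.sub_add_cancel (by omega)]
  have hκC : κ ∈ C := hκ ▸ hC.pmul_mem _ (hC.ppow_mem ha ι) _ hb
  have hκκ : pmul π κ κ = allOnes (4 * n) := by
    rw [hκ, hC.pmul_ppow_pmul_self ha hb hN hrel, hb2]
  have hπκ0 : π κ ⟨0, by omega⟩ = (π a ^ ι) ⟨4 * n - 1, by omega⟩ := by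
    rw [hκ, hC.map_pmul _ (hC.ppow_mem ha ι) _ hb, hC.map_ppow ha, Equiv.Perm.mul_apply]
    exact congrArg _ (Fin.ext (by simp [hπb]))
  have hlast : κ ((π a ^ ι) ⟨4 * n - 1, by omega⟩) = 1 := by
    rw [← hπκ0, apply_eq_add_one_of_pmul_self hκκ, hκfirst, zero_add]
  obtain ⟨c, hc⟩ := exists_forall_apply_eq_add hκ0 hκu
    ((hker _).1 (hC.image_add_permAct_eq ha (hC.ppow_mem ha _) hN ((hker κ).2 (by simp))))
  have hform := hπa.apply_eq_of_apply_eq_add hn hc hκfirst hlast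
  obtain rfl | rfl : c = 0 ∨ c = 1 := by generalize c = x; revert x; decide
  · have hκ' : κ = secondHalfOnes n := funext fun j => by simp [hform, secondHalfOnes]
    refine absurd (hκ' ▸ hκC) (hC.secondHalfOnes_notMem hu hπu hdist hn2 ha hπa ha2n ?_)
    rw [← hκ', hπκ0]
    exact not_lt.1 ((hπa.pow_apply_lt_iff ι _).not.2 (by dsimp only; omega))
  · have hι : (ι : ZMod 2) = ((ι % 2 : ℕ) : ZMod 2) := (ZMod.natCast_mod ι 2).symm
    refine ⟨fun h => funext fun j => ?_, fun h => funext fun j => ?_⟩ <;>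
      rw [hform, ZMod.natCast_mod, hι, h] <;> split_ifs <;> grind
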